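/- arXiv:math/0605720 — 2 statements merged into one kernel-verified Lean document; each statement's English description precedes it below -/
import Mathlib

section
/- Let q(t,s) = min(t,s) − t s be the Brownian-bridge covariance kernel on [0,1], and let λ(dt) = √12·(1_{[0,1/3]∪[2/3,1]}(t) dt + (1/6)(δ_{1/3}(dt) + δ_{2/3}(dt))). Then I := ∫₀¹∫₀¹ q(t,s) λ(ds) λ(dt) = 26/27. -/
/-- Pairing of a function against the signed measure
`λ(dt) = √12 (1_{[0,1/3]∪[2/3,1]}(t) dt + (1/6)(δ_{1/3}(dt) + δ_{2/3}(dt)))`. -/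
noncomputable def lamPairingExc (f : ℝ → ℝ) : ℝ :=
  Real.sqrt 12 * ((∫ t in (0:ℝ)..(1/3), f t) + (∫ t in (2/3:ℝ)..1, f t)
    + (f (1/3) + f (2/3)) / 6)

lemma lin_integral (e d a b : ℝ) :
    ∫ s in a..b, (e * s + d) = e * (b^2 - a^2) / 2 + d * (b - a) := by
  rw [intervalIntegral.integral_add (intervalIntegral.intervalIntegrable_id.const_mul e)
      intervalIntegrable_const,
    intervalIntegral.integral_const_mul, integral_id, intervalIntegral.integral_const]
  simp only [smul_eq_mul]
  ring

lemma quad_integral (a b : ℝ) :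
    ∫ s in a..b, (s / 2 - s^2 / 2) = (b^2 - a^2) / 4 - (b^3 - a^3) / 6 := by
  have h : (fun s : ℝ => s / 2 - s^2 / 2) = fun s : ℝ => (1/2) * s - (1/2) * s^2 := by
    funext s; ring
  rw [h, intervalIntegral.integral_sub (intervalIntegral.intervalIntegrable_id.const_mul _)
      ((intervalIntegral.intervalIntegrable_pow 2).const_mul _),
    intervalIntegral.integral_const_mul, intervalIntegral.integral_const_mul,
    integral_id, integral_pow]
  norm_num
  ring

lemma inner_low (t : ℝ) (ht0 : 0 ≤ t) (ht1 : t ≤ 1/3) :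
    lamPairingExc (fun s => min t s - t * s) = Real.sqrt 12 * (t/2 - t^2/2) := by
  have hc : Continuous fun s : ℝ => min t s - t * s :=
    (continuous_const.min continuous_id).sub (continuous_const.mul continuous_id)
  have hi : ∀ a b : ℝ, IntervalIntegrable (fun s => min t s - t * s) MeasureTheory.volume a b :=
    fun a b => hc.intervalIntegrable a b
  rw [lamPairingExc]
  have h1 : (∫ s in (0:ℝ)..(1/3), (min t s - t * s))
      = (∫ s in (0:ℝ)..t, (min t s - t * s)) + ∫ s in t..(1/3:ℝ), (min t s - t * s) :=
    (intervalIntegral.integral_add_adjacent_intervals (hi 0 t) (hi t (1/3))).symm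
  have h2 : (∫ s in (0:ℝ)..t, (min t s - t * s)) = ∫ s in (0:ℝ)..t, ((1 - t) * s + 0) := by
    apply intervalIntegral.integral_congr
    intro s hs
    rw [Set.uIcc_of_le ht0] at hs
    show min t s - t * s = (1 - t) * s + 0
    rw [min_eq_right hs.2]; ring
  have h3 : (∫ s in t..(1/3:ℝ), (min t s - t * s)) = ∫ s in t..(1/3:ℝ), ((-t) * s + t) := by
    apply intervalIntegral.integral_congr
    intro s hs
    rw [Set.uIcc_of_le ht1] at hs
    show min t s - t * s = (-t) * s + t
    rw [min_eq_left hs.1]; ring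
  have h4 : (∫ s in (2/3:ℝ)..1, (min t s - t * s)) = ∫ s in (2/3:ℝ)..1, ((-t) * s + t) := by
    apply intervalIntegral.integral_congr
    intro s hs
    rw [Set.uIcc_of_le (by norm_num : (2/3:ℝ) ≤ 1)] at hs
    show min t s - t * s = (-t) * s + t
    have hts : t ≤ s := by linarith [hs.1]
    rw [min_eq_left hts]; ring
  show Real.sqrt 12 * ((∫ s in (0:ℝ)..(1/3), (min t s - t * s))
      + (∫ s in (2/3:ℝ)..1, (min t s - t * s))
      + ((min t (1/3) - t * (1/3)) + (min t (2/3) - t * (2/3))) / 6) = _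
  rw [h1, h2, h3, h4, lin_integral, lin_integral, lin_integral,
    min_eq_left (by linarith : t ≤ (1/3:ℝ)), min_eq_left (by linarith : t ≤ (2/3:ℝ))]
  ring

lemma inner_high (t : ℝ) (ht0 : 2/3 ≤ t) (ht1 : t ≤ 1) :
    lamPairingExc (fun s => min t s - t * s) = Real.sqrt 12 * (t/2 - t^2/2) := by
  have hc : Continuous fun s : ℝ => min t s - t * s :=
    (continuous_const.min continuous_id).sub (continuous_const.mul continuous_id)
  have hi : ∀ a b : ℝ, IntervalIntegrable (fun s => min t s - t * s) MeasureTheory.volume a b :=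
    fun a b => hc.intervalIntegrable a b
  rw [lamPairingExc]
  have h1 : (∫ s in (2/3:ℝ)..1, (min t s - t * s))
      = (∫ s in (2/3:ℝ)..t, (min t s - t * s)) + ∫ s in t..(1:ℝ), (min t s - t * s) :=
    (intervalIntegral.integral_add_adjacent_intervals (hi (2/3) t) (hi t 1)).symm
  have h2 : (∫ s in (0:ℝ)..(1/3), (min t s - t * s)) = ∫ s in (0:ℝ)..(1/3), ((1 - t) * s + 0) := by
    apply intervalIntegral.integral_congr
    intro s hs
    rw [Set.uIcc_of_le (by norm_num : (0:ℝ) ≤ 1/3)] at hs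
    show min t s - t * s = (1 - t) * s + 0
    have hst : s ≤ t := by linarith [hs.2]
    rw [min_eq_right hst]; ring
  have h3 : (∫ s in (2/3:ℝ)..t, (min t s - t * s)) = ∫ s in (2/3:ℝ)..t, ((1 - t) * s + 0) := by
    apply intervalIntegral.integral_congr
    intro s hs
    rw [Set.uIcc_of_le ht0] at hs
    show min t s - t * s = (1 - t) * s + 0
    rw [min_eq_right hs.2]; ring
  have h4 : (∫ s in t..(1:ℝ), (min t s - t * s)) = ∫ s in t..(1:ℝ), ((-t) * s + t) := by
    apply intervalIntegral.integral_congr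
    intro s hs
    rw [Set.uIcc_of_le ht1] at hs
    show min t s - t * s = (-t) * s + t
    rw [min_eq_left hs.1]; ring
  show Real.sqrt 12 * ((∫ s in (0:ℝ)..(1/3), (min t s - t * s))
      + (∫ s in (2/3:ℝ)..1, (min t s - t * s))
      + ((min t (1/3) - t * (1/3)) + (min t (2/3) - t * (2/3))) / 6) = _
  rw [h1, h2, h3, h4, lin_integral, lin_integral, lin_integral,
    min_eq_right (by linarith : (1/3:ℝ) ≤ t), min_eq_right (by linarith : (2/3:ℝ) ≤ t)]
  ring

/-- With the Brownian-bridge kernel `q(t,s) = min t s - t s`,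
`I := ∫∫ q dλ dλ = 26/27`. -/
theorem excursion_I_eq :
    lamPairingExc (fun t => lamPairingExc (fun s => min t s - t * s)) = 26 / 27 := by
  rw [lamPairingExc]
  show Real.sqrt 12 * ((∫ t in (0:ℝ)..(1/3), lamPairingExc (fun s => min t s - t * s))
      + (∫ t in (2/3:ℝ)..1, lamPairingExc (fun s => min t s - t * s))
      + (lamPairingExc (fun s => min (1/3:ℝ) s - (1/3) * s)
        + lamPairingExc (fun s => min (2/3:ℝ) s - (2/3) * s)) / 6) = 26 / 27
  have o1 : (∫ t in (0:ℝ)..(1/3), lamPairingExc (fun s => min t s - t * s))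
      = ∫ t in (0:ℝ)..(1/3), Real.sqrt 12 * (t/2 - t^2/2) := by
    apply intervalIntegral.integral_congr
    intro t ht
    rw [Set.uIcc_of_le (by norm_num : (0:ℝ) ≤ 1/3)] at ht
    exact inner_low t ht.1 ht.2
  have o2 : (∫ t in (2/3:ℝ)..1, lamPairingExc (fun s => min t s - t * s))
      = ∫ t in (2/3:ℝ)..1, Real.sqrt 12 * (t/2 - t^2/2) := by
    apply intervalIntegral.integral_congr
    intro t ht
    rw [Set.uIcc_of_le (by norm_num : (2/3:ℝ) ≤ 1)] at ht
    exact inner_high t ht.1 ht.2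
  rw [o1, o2, inner_low (1/3) (by norm_num) (by norm_num),
    inner_high (2/3) (by norm_num) (by norm_num),
    intervalIntegral.integral_const_mul, intervalIntegral.integral_const_mul]
  have q1 := quad_integral 0 (1/3)
  have q2 := quad_integral (2/3) 1
  rw [show (fun t : ℝ => t/2 - t^2/2) = fun t : ℝ => t/2 - t^2/2 from rfl, q1, q2]
  have h12 : Real.sqrt 12 * Real.sqrt 12 = 12 := Real.mul_self_sqrt (by norm_num)
  nlinarith [h12]
end

section
/- With q(t,s) = min(t,s) − ts (Brownian bridge kernel) and λ(dt) = √12(1_{[0,1/3]∪[2/3,1]}(t) dt + (1/6)(δ_{1/3} + δ_{2/3})(dt)), the function Λ(t) := ∫₀¹ q(t,s) λ(ds) equals √3·t(1−t) for t ∈ [0,1/3]∪[2/3,1] and equals 2√3/9 for t ∈ (1/3,2/3). -/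
lemma integ_min_left (t a b : ℝ) (hab : a ≤ b) (hb : b ≤ t) :
    ∫ s in a..b, (min t s - t * s) = (1 - t) * (b ^ 2 - a ^ 2) / 2 := by
  rw [intervalIntegral.integral_congr (g := fun s => (1 - t) * s) ?_]
  · rw [intervalIntegral.integral_const_mul, integral_id]; ring
  · intro s hs
    rw [Set.uIcc_of_le hab] at hs
    have hst : s ≤ t := hs.2.trans hb
    simp only [min_eq_right hst]; ring

lemma integ_min_right (t a b : ℝ) (hab : a ≤ b) (ha : t ≤ a) :
    ∫ s in a..b, (min t s - t * s) = t * (b - a) - t * (b ^ 2 - a ^ 2) / 2 := by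
  rw [intervalIntegral.integral_congr (g := fun s => t - t * s) ?_]
  · rw [intervalIntegral.integral_sub intervalIntegrable_const
      ((continuous_mul_left t).intervalIntegrable a b),
      intervalIntegral.integral_const, intervalIntegral.integral_const_mul, integral_id]
    simp; ring
  · intro s hs
    rw [Set.uIcc_of_le hab] at hs
    have hst : t ≤ s := ha.trans hs.1
    simp only [min_eq_left hst]

lemma integ_min_cont (t : ℝ) : Continuous fun s : ℝ => min t s - t * s :=
  (continuous_const.min continuous_id).sub (continuous_const.mul continuous_id)

lemma integ_min_split (t a b : ℝ) (ha : a ≤ t) (hb : t ≤ b) :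
    ∫ s in a..b, (min t s - t * s)
      = (1 - t) * (t ^ 2 - a ^ 2) / 2 + (t * (b - t) - t * (b ^ 2 - t ^ 2) / 2) := by
  rw [← intervalIntegral.integral_add_adjacent_intervals (b := t)
      ((integ_min_cont t).intervalIntegrable a t) ((integ_min_cont t).intervalIntegrable t b),
    integ_min_left t a t ha le_rfl, integ_min_right t t b hb le_rfl]

/-- With the bridge kernel `q(t,s) = min t s - t s`, `Λ(t) := ∫ q(t,s) λ(ds)` equals
`√3 t (1-t)` on `[0,1/3] ∪ [2/3,1]` and `2√3/9` on `(1/3,2/3)`. -/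
theorem excursion_Lambda_formula :
    (∀ t ∈ Set.Icc (0:ℝ) (1/3) ∪ Set.Icc (2/3:ℝ) 1,
      lamPairingExc (fun s => min t s - t * s) = Real.sqrt 3 * t * (1 - t)) ∧
    (∀ t ∈ Set.Ioo (1/3:ℝ) (2/3),
      lamPairingExc (fun s => min t s - t * s) = 2 * Real.sqrt 3 / 9) := by
  have sqrt12 : Real.sqrt 12 = 2 * Real.sqrt 3 := by
    rw [show (12:ℝ) = 2 ^ 2 * 3 by norm_num, Real.sqrt_mul (by positivity),
      Real.sqrt_sq (by norm_num)]
  constructor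
  · rintro t (⟨ht0, ht1⟩ | ⟨ht0, ht1⟩)
    · simp only [lamPairingExc, sqrt12,
        integ_min_split t 0 (1/3) ht0 ht1,
        integ_min_right t (2/3) 1 (by norm_num) (by linarith),
        min_eq_left ht1, min_eq_left (by linarith : t ≤ 2/3)]
      ring
    · simp only [lamPairingExc, sqrt12,
        integ_min_left t 0 (1/3) (by norm_num) (by linarith),
        integ_min_split t (2/3) 1 ht0 ht1,
        min_eq_right (by linarith : (1/3:ℝ) ≤ t),
        min_eq_right (by linarith : (2/3:ℝ) ≤ t)]
      ring
  · rintro t ⟨ht0, ht1⟩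
    simp only [lamPairingExc, sqrt12,
      integ_min_left t 0 (1/3) (by norm_num) (by linarith),
      integ_min_right t (2/3) 1 (by norm_num) (by linarith),
      min_eq_right (le_of_lt ht0), min_eq_left (le_of_lt ht1)]
    ring
end
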